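/- arXiv:0909.4027 — 2 statements merged into one kernel-verified Lean document; each statement's English description precedes it below -/
import Mathlib

section
/- In an A-group G, for all x, y, w ∈ G: if x ⊂ wx, y ⊂ wx and y ∩ w = 1, then y ⊂ x. -/
/-!
Put `t = w ∩ wx` and `s = w⁻¹t ⊂ x`. Since `y ∩ t = 1` and both lie below `wx`, the element `y`
is orthogonal to `t`, so `yt = ty = y ∪ t ⊂ wx`. Left translation by `t⁻¹` identifies the
interval `[t, wx]` with `[1, t⁻¹wx]` and hence gives `y ⊂ t⁻¹wx = s⁻¹x`; translating back along
`[s, x]` gives `s ⊂ sy ⊂ x`. Finally `s ⊂ sy` means `s⁻¹ ∩ y = 1`, i.e. `y⁻¹ ⊂ (sy)⁻¹`, and A₁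
turns this into `y ⊂ sy ⊂ x`.
-/

namespace ArtinMedian

/-- A median group, presented via a meet-semilattice operation `∩` (with induced
order `x ⊂ y ↔ x ∩ y = x`) satisfying: (1) `1 ⊂ x`; (2) `x ⊂ y → y ⊂ z →
z⁻¹y ⊂ z⁻¹x`; (3) `x⁻¹(x ∩ y) ⊂ x⁻¹y`. -/
class MedianGroup (G : Type*) extends Group G where
  meet : G → G → G
  meet_comm : ∀ x y, meet x y = meet y x
  meet_assoc : ∀ x y z, meet (meet x y) z = meet x (meet y z)
  meet_idem : ∀ x, meet x x = x
  one_meet : ∀ x, meet 1 x = 1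
  inv_mul_antitone : ∀ x y z, meet x y = x → meet y z = y →
    meet (z⁻¹ * y) (z⁻¹ * x) = z⁻¹ * y
  meet_axiom : ∀ x y, meet (x⁻¹ * meet x y) (x⁻¹ * y) = x⁻¹ * meet x y

namespace MedianGroup

variable {G : Type*} [MedianGroup G]

/-- The order `x ⊂ y` of a median group. -/
def sub (x y : G) : Prop := meet x y = x

/-- `j` is the join (least upper bound) `x ∪ y`. -/
def isJoin (x y j : G) : Prop :=
  sub x j ∧ sub y j ∧ ∀ c, sub x c → sub y c → sub j c

/-- The join `x ∪ y` exists (`x ∪ y ≠ ∞`). -/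
def hasJoin (x y : G) : Prop := ∃ j, isJoin x y j

/-- Orthogonality: `x ⊥ y` iff `x ∩ y = 1` and `x ∪ y` exists. -/
def orth (x y : G) : Prop := meet x y = 1 ∧ hasJoin x y

/-- `G` is a `⊥`-group: `x ⊥ y` implies `x ∪ y = xy`. -/
def PerpGroup (G : Type*) [MedianGroup G] : Prop :=
  ∀ x y : G, orth x y → isJoin x y (x * y)

/-- Axiom A₁: `x ∪ y` exists and `x⁻¹ ⊂ y⁻¹` imply `x ⊂ y`. -/
def A1 (G : Type*) [MedianGroup G] : Prop :=
  ∀ x y : G, hasJoin x y → sub x⁻¹ y⁻¹ → sub x y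

/-- Axiom A₂: `x ∩ y = x⁻¹ ∩ z = y⁻¹ ∩ z = 1` imply `xz ∩ yz ⊂ z`. -/
def A2 (G : Type*) [MedianGroup G] : Prop :=
  ∀ x y z : G, meet x y = 1 → meet x⁻¹ z = 1 → meet y⁻¹ z = 1 →
    sub (meet (x * z) (y * z)) z

/-- Axiom A₄: if `x ∪ x⁻¹` exists then `x = 1`. -/
def A4 (G : Type*) [MedianGroup G] : Prop :=
  ∀ x : G, hasJoin x x⁻¹ → x = 1

/-- An A-group: a `⊥`-group satisfying A₁, A₂ and A₄. -/
def AGroup (G : Type*) [MedianGroup G] : Prop :=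
  PerpGroup G ∧ A1 G ∧ A2 G ∧ A4 G

/-- The median of a median group: `Y(x,y,z) = x·((x⁻¹y) ∩ (x⁻¹z))`. -/
def medY (x y z : G) : G := x * meet (x⁻¹ * y) (x⁻¹ * z)

/-- The interval (cell) `[x,y]` of a median group. -/
def interval (x y : G) : Set G := {z | sub (x⁻¹ * z) (x⁻¹ * y)}

/-- Convexity of a subset of a median group. -/
def IsConvex (C : Set G) : Prop :=
  ∀ x y z : G, x ∈ C → y ∈ C → medY x z y ∈ C

theorem sub_trans {a b c : G} (hab : sub a b) (hbc : sub b c) : sub a c := by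
  unfold sub at *
  rw [← hab, meet_assoc, hbc]

theorem sub_antisymm {a b : G} (hab : sub a b) (hba : sub b a) : a = b := by
  unfold sub at *
  rw [← hab, meet_comm, hba]

theorem one_sub (a : G) : sub 1 a := one_meet a

theorem eq_one_of_sub_one {a : G} (h : sub a 1) : a = 1 := sub_antisymm h (one_sub a)

theorem meet_sub_left (a b : G) : sub (meet a b) a := by
  unfold sub
  rw [meet_comm, ← meet_assoc, meet_idem]

theorem meet_sub_right (a b : G) : sub (meet a b) b := by
  unfold sub
  rw [meet_assoc, meet_idem]

theorem sub_meet {a b c : G} (hb : sub a b) (hc : sub a c) : sub a (meet b c) := by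
  unfold sub at *
  rw [← meet_assoc, hb, hc]

theorem meet_eq_one_of_sub {a b c : G} (hcb : sub c b) (hab : meet a b = 1) :
    meet a c = 1 := by
  apply eq_one_of_sub_one
  rw [← hab]
  exact sub_meet (meet_sub_left a c) (sub_trans (meet_sub_right a c) hcb)

theorem inv_mul_sub_inv_mul {a b c : G} (hab : sub a b) (hbc : sub b c) :
    sub (c⁻¹ * b) (c⁻¹ * a) :=
  inv_mul_antitone a b c hab hbc

theorem mul_sub_mul {a b c : G} (hab : sub a b) (hbc : sub b c⁻¹) : sub (c * b) (c * a) := by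
  simpa using inv_mul_sub_inv_mul hab hbc

theorem inv_mul_sub_inv {b c : G} (h : sub b c) : sub (c⁻¹ * b) c⁻¹ := by
  simpa using inv_mul_sub_inv_mul (one_sub b) h

theorem inv_mul_sub_inv_iff {b c : G} : sub (c⁻¹ * b) c⁻¹ ↔ sub b c :=
  ⟨fun h => by simpa using inv_mul_sub_inv h, inv_mul_sub_inv⟩

theorem sub_mul_iff_meet_eq_one {a b : G} : sub a (a * b) ↔ meet a⁻¹ b = 1 := by
  constructor
  · intro h
    set n := meet a⁻¹ b
    have han : sub (a * n) a := by simpa using inv_mul_sub_inv (meet_sub_left a⁻¹ b)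
    have hge : sub b⁻¹ (b⁻¹ * n) := by
      simpa [mul_assoc] using inv_mul_sub_inv_mul han h
    have hle : sub (b⁻¹ * n) b⁻¹ := inv_mul_sub_inv (meet_sub_right a⁻¹ b)
    simpa using sub_antisymm hle hge
  · intro h
    simpa [sub, h] using meet_axiom a⁻¹ b

theorem sub_mul_iff_inv_sub {a b : G} : sub a (a * b) ↔ sub b⁻¹ (a * b)⁻¹ := by
  rw [mul_inv_rev, sub_mul_iff_meet_eq_one, sub_mul_iff_meet_eq_one, inv_inv, meet_comm]

theorem sub_inv_mul_iff {s y V : G} (hs : sub s V) :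
    sub y (s⁻¹ * V) ↔ sub s (s * y) ∧ sub (s * y) V := by
  constructor
  · intro hy
    have hV : sub (V⁻¹ * (s * y)) (V⁻¹ * s) := by
      simpa [mul_assoc] using inv_mul_sub_inv hy
    have hsV : sub (V⁻¹ * s) V⁻¹ := inv_mul_sub_inv hs
    exact ⟨by simpa using mul_sub_mul hV hsV,
      inv_mul_sub_inv_iff.1 (sub_trans hV hsV)⟩
  · rintro ⟨hsy, hyV⟩
    apply inv_mul_sub_inv_iff.1
    simpa [mul_assoc] using inv_mul_sub_inv_mul hsy hyV

theorem isJoin.symm {a b j : G} (h : isJoin a b j) : isJoin b a j :=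
  ⟨h.2.1, h.1, fun c hb ha => h.2.2 c ha hb⟩

theorem isJoin.unique {a b j j' : G} (h : isJoin a b j) (h' : isJoin a b j') : j = j' :=
  sub_antisymm (h.2.2 _ h'.1 h'.2.1) (h'.2.2 _ h.1 h.2.1)

/-- The join is the reflection of the meet of `V⁻¹a` and `V⁻¹b`; an arbitrary upper bound `c`
is compared with it through `c ∩ V`. -/
theorem isJoin_medY {a b V : G} (ha : sub a V) (hb : sub b V) :
    isJoin a b (medY V a b) := by
  set m := meet (V⁻¹ * a) (V⁻¹ * b)
  have hm : sub m V⁻¹ := sub_trans (meet_sub_left _ _) (inv_mul_sub_inv ha)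
  refine ⟨?_, ?_, fun c hac hbc => ?_⟩
  · simpa [medY] using mul_sub_mul (meet_sub_left _ _) (inv_mul_sub_inv ha)
  · simpa [medY] using mul_sub_mul (meet_sub_right _ _) (inv_mul_sub_inv hb)
  · have hu : sub (meet c V) V := meet_sub_right c V
    have hum : sub (V⁻¹ * meet c V) m :=
      sub_meet (inv_mul_sub_inv_mul (sub_meet hac ha) hu)
        (inv_mul_sub_inv_mul (sub_meet hbc hb) hu)
    have hmu : sub (V * m) (meet c V) := by simpa using mul_sub_mul hum hm
    exact sub_trans hmu (meet_sub_left c V)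

theorem PerpGroup.mul_comm_of_orth (hG : PerpGroup G) {a b : G} (h : orth a b) :
    a * b = b * a :=
  (hG a b h).unique (hG b a ⟨by rw [meet_comm, h.1], _, (hG a b h).symm⟩).symm

/-- Lemma 4.9: in an A-group, if `x ⊂ wx`, `y ⊂ wx` and
`y ∩ w = 1`, then `y ⊂ x`. -/
theorem sub_of_sub_mul {G : Type*} [MedianGroup G] (hG : AGroup G)
    (x y w : G) (hx : sub x (w * x)) (hy : sub y (w * x))
    (hyw : meet y w = 1) : sub y x := by
  obtain ⟨hperp, hA1, -, -⟩ := hG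
  set t := meet w (w * x)
  have ht : sub t (w * x) := meet_sub_right w (w * x)
  have horth : orth y t :=
    ⟨meet_eq_one_of_sub (meet_sub_left w (w * x)) hyw, _, isJoin_medY hy ht⟩
  have hty : sub t (t * y) ∧ sub (t * y) (w * x) := by
    rw [← hperp.mul_comm_of_orth horth]
    exact ⟨(hperp y t horth).2.1, (hperp y t horth).2.2 _ hy ht⟩
  set s := w⁻¹ * t
  have hs : sub s x := by simpa [sub] using meet_axiom w (w * x)
  have hys : sub y (s⁻¹ * x) := by
    rw [show s⁻¹ * x = t⁻¹ * (w * x) by simp [s, mul_assoc]]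
    exact (sub_inv_mul_iff ht).2 hty
  obtain ⟨hssy, hsyx⟩ := (sub_inv_mul_iff hs).1 hys
  have hysy : sub y (s * y) :=
    hA1 _ _ ⟨_, isJoin_medY hy (sub_trans hsyx hx)⟩ (sub_mul_iff_inv_sub.1 hssy)
  exact sub_trans hysy hsyx

end MedianGroup
end ArtinMedian
end

section
/- In an A-group G, for all x, y, w ∈ G: if x ⊂ w and x ⊥ y, then x ⊂ ywy⁻¹. -/
namespace ArtinMedian

namespace MedianGroup

variable {G : Type*} [MedianGroup G]

section Aux

/-! ### Basic order calculus -/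

lemma my_sub_refl (x : G) : sub x x := meet_idem x

lemma my_sub_antisymm {x y : G} (h1 : sub x y) (h2 : sub y x) : x = y := by
  unfold sub at h1 h2
  calc x = meet x y := h1.symm
    _ = meet y x := meet_comm x y
    _ = y := h2

lemma my_sub_trans {x y z : G} (h1 : sub x y) (h2 : sub y z) : sub x z := by
  unfold sub at *
  calc meet x z = meet (meet x y) z := by rw [h1]
    _ = meet x (meet y z) := meet_assoc x y z
    _ = meet x y := by rw [h2]
    _ = x := h1

lemma my_one_sub (x : G) : sub (1 : G) x := one_meet x

lemma my_sub_one {x : G} (h : sub x 1) : x = 1 :=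
  my_sub_antisymm h (my_one_sub x)

lemma my_meet_sub_left (x y : G) : sub (meet x y) x := by
  unfold sub
  rw [meet_comm x y, meet_assoc, meet_idem]

lemma my_meet_sub_right (x y : G) : sub (meet x y) y := by
  unfold sub
  rw [meet_assoc, meet_idem]

lemma my_sub_meet {c x y : G} (h1 : sub c x) (h2 : sub c y) : sub c (meet x y) := by
  unfold sub at *
  rw [← meet_assoc, h1, h2]

/-- if `c ⊂ d` and `d ∩ e = 1` then `c ∩ e = 1`. -/
lemma my_meet_eq_one_of_sub {c d e : G} (h : sub c d) (h1 : meet d e = 1) :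
    meet c e = 1 := by
  apply my_sub_one
  have m1 : sub (meet c e) d := my_sub_trans (my_meet_sub_left c e) h
  have m2 : sub (meet c e) e := my_meet_sub_right c e
  have := my_sub_meet m1 m2
  rwa [h1] at this

/-- The antitone axiom, in `sub` language. -/
lemma my_anti {x y z : G} (h1 : sub x y) (h2 : sub y z) :
    sub (z⁻¹ * y) (z⁻¹ * x) :=
  inv_mul_antitone x y z h1 h2

/-- T2, forward direction. -/
lemma my_sub_inv_of_sub {a b : G} (h : sub a b) : sub (b⁻¹ * a) b⁻¹ := by
  have := my_anti (my_one_sub a) h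
  rwa [mul_one] at this

/-- T2, backward direction. -/
lemma my_sub_of_sub_inv {a b : G} (h : sub (b⁻¹ * a) b⁻¹) : sub a b := by
  have := my_anti (my_one_sub (b⁻¹ * a)) h
  rwa [mul_one, inv_inv, mul_inv_cancel_left] at this

/-- Lemma M: `a⁻¹ ∩ b = 1 → a ⊂ ab`. -/
lemma my_sub_mul {a b : G} (h : meet a⁻¹ b = 1) : sub a (a * b) := by
  have := meet_axiom a⁻¹ b
  rwa [h, inv_inv, mul_one] at this

/-- Lemma G: `a ⊂ b → a⁻¹ ∩ a⁻¹b = 1`. -/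
lemma my_meet_inv_eq_one {a b : G} (h : sub a b) : meet a⁻¹ (a⁻¹ * b) = 1 := by
  set m := meet a⁻¹ (a⁻¹ * b) with hm
  have hm1 : sub m a⁻¹ := my_meet_sub_left _ _
  have hm2 : sub m (a⁻¹ * b) := my_meet_sub_right _ _
  have ham : sub (a * m) a := by
    apply my_sub_of_sub_inv
    have e : a⁻¹ * (a * m) = m := by group
    rwa [e]
  have h3 : sub (b⁻¹ * a) (b⁻¹ * (a * m)) := my_anti ham h
  have h4 : sub (b⁻¹ * (a * m)) (b⁻¹ * a) := by
    have h5 := my_sub_inv_of_sub hm2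
    have e1 : (a⁻¹ * b)⁻¹ * m = b⁻¹ * (a * m) := by group
    have e2 : (a⁻¹ * b)⁻¹ = b⁻¹ * a := by group
    rwa [e1, e2] at h5
  have h5 : b⁻¹ * (a * m) = b⁻¹ * a := my_sub_antisymm h4 h3
  have h6 : a * m = a := mul_left_cancel h5
  have h7 : a * m = a * 1 := by rw [h6, mul_one]
  exact mul_left_cancel h7

/-- Converse of M. -/
lemma my_meet_inv_eq_one' {a b : G} (h : sub a (a * b)) : meet a⁻¹ b = 1 := by
  have := my_meet_inv_eq_one h
  rwa [inv_mul_cancel_left] at this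

/-- MON: translation by `a⁻¹` is monotone above `a`. -/
lemma my_mon {a u v : G} (h1 : sub a u) (h2 : sub u v) :
    sub (a⁻¹ * u) (a⁻¹ * v) := by
  apply my_sub_of_sub_inv
  have h3 : sub (v⁻¹ * u) (v⁻¹ * a) := my_anti h1 h2
  have e1 : (a⁻¹ * v)⁻¹ * (a⁻¹ * u) = v⁻¹ * u := by group
  have e2 : (a⁻¹ * v)⁻¹ = v⁻¹ * a := by group
  rw [e1, e2]; exact h3

/-- ZL: `x ⊂ a`, `s ⊂ x⁻¹a` imply `xs ⊂ a`. -/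
lemma my_zl {x a s : G} (hxa : sub x a) (hs : sub s (x⁻¹ * a)) : sub (x * s) a := by
  apply my_sub_of_sub_inv
  have h1 := my_anti (my_one_sub s) hs
  have e1 : (x⁻¹ * a)⁻¹ * s = a⁻¹ * (x * s) := by group
  have e2 : (x⁻¹ * a)⁻¹ * 1 = a⁻¹ * x := by group
  rw [e1, e2] at h1
  exact my_sub_trans h1 (my_sub_inv_of_sub hxa)

/-- LI: local left invariance of the meet. -/
lemma my_li {r A B : G} (hA : sub r A) (hB : sub r B) :
    r⁻¹ * meet A B = meet (r⁻¹ * A) (r⁻¹ * B) := by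
  have hrm : sub r (meet A B) := my_sub_meet hA hB
  have dir1 : sub (r⁻¹ * meet A B) (meet (r⁻¹ * A) (r⁻¹ * B)) :=
    my_sub_meet (my_mon hrm (my_meet_sub_left A B)) (my_mon hrm (my_meet_sub_right A B))
  set z := meet (r⁻¹ * A) (r⁻¹ * B) with hz
  have hz1 : sub z (r⁻¹ * A) := my_meet_sub_left _ _
  have hz2 : sub z (r⁻¹ * B) := my_meet_sub_right _ _
  have hG1 : meet r⁻¹ (r⁻¹ * A) = 1 := my_meet_inv_eq_one hA
  have hmeet1 : meet r⁻¹ z = 1 := by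
    apply my_sub_one
    have m1 : sub (meet r⁻¹ z) r⁻¹ := my_meet_sub_left _ _
    have m2 : sub (meet r⁻¹ z) (r⁻¹ * A) := my_sub_trans (my_meet_sub_right _ _) hz1
    have := my_sub_meet m1 m2
    rwa [hG1] at this
  have hrz : sub r (r * z) := my_sub_mul hmeet1
  have hza : sub (r * z) A := my_zl hA hz1
  have hzb : sub (r * z) B := my_zl hB hz2
  have hfin : sub (r⁻¹ * (r * z)) (r⁻¹ * meet A B) := my_mon hrz (my_sub_meet hza hzb)
  have e : r⁻¹ * (r * z) = z := by group
  rw [e] at hfin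
  exact my_sub_antisymm dir1 hfin

/-! ### Join machinery -/

lemma my_medY_upper {x y c : G} (hx : sub x c) (hy : sub y c) :
    sub x (medY c x y) ∧ sub y (medY c x y) ∧ sub (medY c x y) c ∧
      sub (x⁻¹ * medY c x y) (x⁻¹ * y) := by
  have hp : sub (c⁻¹ * x) c⁻¹ := my_sub_inv_of_sub hx
  have hq : sub (c⁻¹ * y) c⁻¹ := my_sub_inv_of_sub hy
  set m := meet (c⁻¹ * x) (c⁻¹ * y) with hmdef
  have hj : medY c x y = c * m := rfl
  have hmp : sub m (c⁻¹ * x) := my_meet_sub_left _ _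
  have hmq : sub m (c⁻¹ * y) := my_meet_sub_right _ _
  have hxj : sub x (c * m) := by
    have h1 := my_anti hmp hp
    have e1 : (c⁻¹)⁻¹ * (c⁻¹ * x) = x := by group
    have e2 : (c⁻¹)⁻¹ * m = c * m := by group
    rwa [e1, e2] at h1
  have hyj : sub y (c * m) := by
    have h1 := my_anti hmq hq
    have e1 : (c⁻¹)⁻¹ * (c⁻¹ * y) = y := by group
    have e2 : (c⁻¹)⁻¹ * m = c * m := by group
    rwa [e1, e2] at h1
  have hjc : sub (c * m) c := by
    apply my_sub_of_sub_inv
    have e : c⁻¹ * (c * m) = m := by group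
    rw [e]
    exact my_sub_trans hmp hp
  have hkey : sub (x⁻¹ * (c * m)) (x⁻¹ * y) := by
    have h1 := meet_axiom (c⁻¹ * x) (c⁻¹ * y)
    rw [← hmdef] at h1
    have e1 : (c⁻¹ * x)⁻¹ * m = x⁻¹ * (c * m) := by group
    have e2 : (c⁻¹ * x)⁻¹ * (c⁻¹ * y) = x⁻¹ * y := by group
    rw [e1, e2] at h1
    exact h1
  rw [hj]
  exact ⟨hxj, hyj, hjc, hkey⟩

/-- Any pair bounded above has a join, namely `medY c x y`. -/
lemma my_isJoin_medY {x y c : G} (hx : sub x c) (hy : sub y c) :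
    isJoin x y (medY c x y) := by
  obtain ⟨hxj, hyj, _, hkey⟩ := my_medY_upper hx hy
  refine ⟨hxj, hyj, ?_⟩
  intro d hxd hyd
  obtain ⟨hxjd, hyjd, hjdd, _⟩ := my_medY_upper hxd hyd
  set j := medY c x y with hjdef
  set jd := medY d x y with hjddef
  set f := meet j jd with hfdef
  have hxf : sub x f := my_sub_meet hxj hxjd
  have hyf : sub y f := my_sub_meet hyj hyjd
  have hfj : sub f j := my_meet_sub_left _ _
  have st1 : sub (x⁻¹ * f) (x⁻¹ * j) := my_mon hxf hfj
  have st3 : sub ((x⁻¹ * f)⁻¹ * (x⁻¹ * j)) ((x⁻¹ * f)⁻¹ * (x⁻¹ * y)) :=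
    my_mon st1 hkey
  have e1 : (x⁻¹ * f)⁻¹ * (x⁻¹ * j) = f⁻¹ * j := by group
  have e2 : (x⁻¹ * f)⁻¹ * (x⁻¹ * y) = f⁻¹ * y := by group
  rw [e1, e2] at st3
  have st4 : sub (f⁻¹ * y) f⁻¹ := my_sub_inv_of_sub hyf
  have st5 : sub (f⁻¹ * j) f⁻¹ := my_sub_trans st3 st4
  have st6 : sub j f := my_sub_of_sub_inv st5
  exact my_sub_trans (my_sub_trans st6 (my_meet_sub_right _ _)) hjdd

lemma my_hasJoin_of_bounded {x y c : G} (hx : sub x c) (hy : sub y c) :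
    hasJoin x y := ⟨medY c x y, my_isJoin_medY hx hy⟩

lemma my_join_unique {x y j j' : G} (h1 : isJoin x y j) (h2 : isJoin x y j') :
    j = j' :=
  my_sub_antisymm (h1.2.2 j' h2.1 h2.2.1) (h2.2.2 j h1.1 h1.2.1)

/-! ### Orthogonality -/

lemma my_orth_symm {x y : G} (h : orth x y) : orth y x := by
  obtain ⟨h1, j, hj⟩ := h
  exact ⟨by rw [meet_comm]; exact h1, j, hj.2.1, hj.1, fun c hc1 hc2 => hj.2.2 c hc2 hc1⟩

lemma my_orth_mul_comm (hP : PerpGroup G) {x y : G} (h : orth x y) : x * y = y * x := by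
  have j1 := hP x y h
  have j2 := hP y x (my_orth_symm h)
  exact my_join_unique j1 ⟨j2.2.1, j2.1, fun c hc1 hc2 => j2.2.2 c hc2 hc1⟩

lemma my_sub_mul_right (hP : PerpGroup G) {x y : G} (h : orth x y) : sub x (x * y) :=
  (hP x y h).1

lemma my_sub_mul_left (hP : PerpGroup G) {x y : G} (h : orth x y) : sub y (x * y) :=
  (hP x y h).2.1

/-- `x ⊥ y → x⁻¹ ∩ y = 1`. -/
lemma my_orth_meet_inv_left (hP : PerpGroup G) {x y : G} (h : orth x y) :
    meet x⁻¹ y = 1 :=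
  my_meet_inv_eq_one' (my_sub_mul_right hP h)

lemma my_orth_down_left (hP : PerpGroup G) {a b a' : G} (h : orth a b) (ha' : sub a' a) :
    orth a' b := by
  constructor
  · exact my_meet_eq_one_of_sub ha' h.1
  · exact my_hasJoin_of_bounded (my_sub_trans ha' (my_sub_mul_right hP h))
      (my_sub_mul_left hP h)

lemma my_orth_down_right (hP : PerpGroup G) {a b b' : G} (h : orth a b) (hb' : sub b' b) :
    orth a b' :=
  my_orth_symm (my_orth_down_left hP (my_orth_symm h) hb')

/-- `x ⊥ y → x ∩ y⁻¹ = 1`. -/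
lemma my_orth_meet_right_inv (hP : PerpGroup G) {x y : G} (h : orth x y) :
    meet x y⁻¹ = 1 := by
  set k := meet x y⁻¹ with hk
  have hk1 : sub k x := my_meet_sub_left _ _
  have hk2 : sub k y⁻¹ := my_meet_sub_right _ _
  have hky : orth k y := my_orth_down_left hP h hk1
  have h1 : sub k (k * y) := my_sub_mul_right hP hky
  have hcomm : k * y = y * k := my_orth_mul_comm hP hky
  have h2 : sub (y * k) y := by
    apply my_sub_of_sub_inv
    have e : y⁻¹ * (y * k) = k := by group
    rwa [e]
  have h3 : sub k y := my_sub_trans (hcomm ▸ h1) h2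
  have h3' : meet k y = k := h3
  exact h3'.symm.trans hky.1

/-- Both inverses are below `(xy)⁻¹`. -/
lemma my_orth_inv_bounds (hP : PerpGroup G) {x y : G} (h : orth x y) :
    sub x⁻¹ (x * y)⁻¹ ∧ sub y⁻¹ (x * y)⁻¹ := by
  have hcomm : x * y = y * x := my_orth_mul_comm hP h
  have hmyx : meet y x⁻¹ = 1 := by
    rw [meet_comm]; exact my_orth_meet_inv_left hP h
  have hy' : sub y⁻¹ (y⁻¹ * x⁻¹) := by
    apply my_sub_mul
    rwa [inv_inv]
  have hx' : sub x⁻¹ (y⁻¹ * x⁻¹) := by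
    apply my_sub_of_sub_inv
    have e1 : (y⁻¹ * x⁻¹)⁻¹ * x⁻¹ = y := by
      have e : (y⁻¹ * x⁻¹)⁻¹ * x⁻¹ = (x * y) * x⁻¹ := by group
      rw [e, hcomm, mul_inv_cancel_right]
    have e2 : (y⁻¹ * x⁻¹)⁻¹ = x * y := by group
    rw [e1, e2]
    exact my_sub_mul_left hP h
  rw [mul_inv_rev]
  exact ⟨hx', hy'⟩

/-- O1: `x ⊥ y → x⁻¹ ∩ y⁻¹ = 1`. -/
lemma my_orth_meet_inv_inv (hP : PerpGroup G) {x y : G} (h : orth x y) :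
    meet x⁻¹ y⁻¹ = 1 := by
  have hcomm : x * y = y * x := my_orth_mul_comm hP h
  obtain ⟨hxinv, hyinv⟩ := my_orth_inv_bounds hP h
  set n := meet x⁻¹ y⁻¹ with hn
  have hn1 : sub n x⁻¹ := my_meet_sub_left _ _
  have hn2 : sub n y⁻¹ := my_meet_sub_right _ _
  have a1 := my_anti hn1 hxinv
  have e3 : ((x * y)⁻¹)⁻¹ * x⁻¹ = y := by
    have e : ((x * y)⁻¹)⁻¹ * x⁻¹ = (x * y) * x⁻¹ := by group
    rw [e, hcomm, mul_inv_cancel_right]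
  have e4 : ((x * y)⁻¹)⁻¹ * n = (x * y) * n := by group
  rw [e3, e4] at a1
  have a2 := my_anti hn2 hyinv
  have e5 : ((x * y)⁻¹)⁻¹ * y⁻¹ = x := by
    have e : ((x * y)⁻¹)⁻¹ * y⁻¹ = (x * y) * y⁻¹ := by group
    rw [e, mul_inv_cancel_right]
  rw [e5, e4] at a2
  have least : sub (x * y) ((x * y) * n) := (hP x y h).2.2 _ a2 a1
  have hone : meet (x * y)⁻¹ n = 1 := my_meet_inv_eq_one' least
  have hnsub : meet n (x * y)⁻¹ = n := my_sub_trans hn1 hxinv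
  calc n = meet n (x * y)⁻¹ := hnsub.symm
    _ = meet (x * y)⁻¹ n := meet_comm _ _
    _ = 1 := hone

lemma my_orth_inv_inv (hP : PerpGroup G) {x y : G} (h : orth x y) : orth x⁻¹ y⁻¹ := by
  obtain ⟨hxinv, hyinv⟩ := my_orth_inv_bounds hP h
  exact ⟨my_orth_meet_inv_inv hP h, my_hasJoin_of_bounded hxinv hyinv⟩

lemma my_orth_inv_right (hP : PerpGroup G) {x y : G} (h : orth x y) : orth x y⁻¹ := by
  refine ⟨my_orth_meet_right_inv hP h, ?_⟩
  have hcomm : x * y = y * x := my_orth_mul_comm hP h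
  have o1 := my_orth_meet_inv_inv hP h
  have bx : sub x (x * y⁻¹) := my_sub_mul o1
  have e : x * y⁻¹ = y⁻¹ * x := by
    have h2 : y * (x * y⁻¹) = y * (y⁻¹ * x) := by
      rw [mul_inv_cancel_left, ← mul_assoc, ← hcomm, mul_inv_cancel_right]
    exact mul_left_cancel h2
  have bx' : sub x (y⁻¹ * x) := e ▸ bx
  have by' : sub y⁻¹ (y⁻¹ * x) := by
    apply my_sub_mul
    rw [inv_inv, meet_comm]
    exact h.1
  exact my_hasJoin_of_bounded bx' by'

lemma my_orth_inv_left (hP : PerpGroup G) {x y : G} (h : orth x y) : orth x⁻¹ y :=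
  my_orth_symm (my_orth_inv_right hP (my_orth_symm h))

/-! ### The two meet-triviality lemmas -/

/-- MT_R: if `θ ∩ κ = 1` and `κ ⊥ z` then `θz⁻¹ ∩ κ = 1`. -/
lemma my_MT_R (hP : PerpGroup G) (hA2 : A2 G) {t k z : G}
    (htk : meet t k = 1) (hkz : orth k z) : meet (t * z⁻¹) k = 1 := by
  set r := meet t⁻¹ z⁻¹ with hr
  have hrt : sub r t⁻¹ := my_meet_sub_left _ _
  have hrz : sub r z⁻¹ := my_meet_sub_right _ _
  have ht' : sub (t * r) t := by
    apply my_sub_of_sub_inv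
    have e : t⁻¹ * (t * r) = r := by group
    rwa [e]
  have hz' : sub (z * r) z := by
    apply my_sub_of_sub_inv
    have e : z⁻¹ * (z * r) = r := by group
    rwa [e]
  have hli := my_li hrt hrz
  rw [← hr, inv_mul_cancel] at hli
  have e1 : r⁻¹ * t⁻¹ = (t * r)⁻¹ := by group
  have e2 : r⁻¹ * z⁻¹ = (z * r)⁻¹ := by group
  rw [e1, e2] at hli
  have horth' : orth k (z * r) := my_orth_down_right hP hkz hz'
  have hkzinv : meet k⁻¹ (z * r)⁻¹ = 1 := my_orth_meet_inv_inv hP horth'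
  have ht'k : meet (t * r) k = 1 := my_meet_eq_one_of_sub ht' htk
  have hconc := hA2 (t * r) k (z * r)⁻¹ ht'k hli.symm hkzinv
  have e3 : (t * r) * (z * r)⁻¹ = t * z⁻¹ := by group
  rw [e3] at hconc
  set g := meet (t * z⁻¹) k with hg
  have hg1 : sub g (t * z⁻¹) := my_meet_sub_left _ _
  have hg2 : sub g k := my_meet_sub_right _ _
  have hksub : sub k (k * (z * r)⁻¹) := my_sub_mul hkzinv
  have hg3 : sub g (k * (z * r)⁻¹) := my_sub_trans hg2 hksub
  have hg4 : sub g ((z * r)⁻¹) := my_sub_trans (my_sub_meet hg1 hg3) hconc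
  have hmeet : meet k ((z * r)⁻¹) = 1 := (my_orth_inv_right hP horth').1
  apply my_sub_one
  have := my_sub_meet hg2 hg4
  rwa [hmeet] at this

/-- MT_L: if `κ ∩ θ = 1` and `κ ⊥ z` then `κ ∩ zθ = 1`. -/
lemma my_MT_L (hP : PerpGroup G) {t k z : G}
    (hkt : meet k t = 1) (hkz : orth k z) : meet k (z * t) = 1 := by
  set r := meet z⁻¹ t with hr
  have hrz : sub r z⁻¹ := my_meet_sub_left _ _
  have hrt : sub r t := my_meet_sub_right _ _
  have hz6 : sub (z * r) z := by
    apply my_sub_of_sub_inv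
    have e : z⁻¹ * (z * r) = r := by group
    rwa [e]
  have hli := my_li hrz hrt
  rw [← hr, inv_mul_cancel] at hli
  have e1 : r⁻¹ * z⁻¹ = (z * r)⁻¹ := by group
  rw [e1] at hli
  have horthz6 : orth k (z * r) := my_orth_down_right hP hkz hz6
  have hkt6 : meet k (r⁻¹ * t) = 1 := by
    apply my_sub_one
    set g' := meet k (r⁻¹ * t) with hg'
    have hg1 : sub g' k := my_meet_sub_left _ _
    have hg2 : sub g' (r⁻¹ * t) := my_meet_sub_right _ _
    have hρg : sub (r * g') t := my_zl hrt hg2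
    have horthrk : orth r k :=
      my_orth_down_left hP (my_orth_symm (my_orth_inv_right hP hkz)) hrz
    have horthrg : orth r g' := my_orth_down_right hP horthrk hg1
    have hsg : sub g' (r * g') := my_sub_mul_left hP horthrg
    have hgt : sub g' t := my_sub_trans hsg hρg
    have := my_sub_meet hg1 hgt
    rwa [hkt] at this
  have hz6t6 : sub (z * r) ((z * r) * (r⁻¹ * t)) := my_sub_mul hli.symm
  have ezt : (z * r) * (r⁻¹ * t) = z * t := by group
  rw [ezt] at hz6t6
  set g := meet k (z * t) with hgdef
  have hgk : sub g k := my_meet_sub_left _ _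
  have hgzt : sub g (z * t) := my_meet_sub_right _ _
  have horthz6g : orth (z * r) g := my_orth_down_right hP (my_orth_symm horthz6) hgk
  have hjoin := hP (z * r) g horthz6g
  have hleast : sub ((z * r) * g) (z * t) := hjoin.2.2 _ hz6t6 hgzt
  have hmon := my_mon hjoin.1 hleast
  have e2 : (z * r)⁻¹ * ((z * r) * g) = g := by group
  have e3 : (z * r)⁻¹ * (z * t) = r⁻¹ * t := by group
  rw [e2, e3] at hmon
  apply my_sub_one
  have := my_sub_meet hgk hmon
  rwa [hkt6] at this

/-- AT_R: `k ⊥ z`, `k ⊂ E` imply `k ⊂ Ez⁻¹`. -/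
lemma my_AT_R (hP : PerpGroup G) (hA2 : A2 G) {k z E : G}
    (h : orth k z) (hkE : sub k E) : sub k (E * z⁻¹) := by
  have htk : meet (k⁻¹ * E) k⁻¹ = 1 := by
    rw [meet_comm]; exact my_meet_inv_eq_one hkE
  have hkz : orth k⁻¹ z := my_orth_inv_left hP h
  have hmt := my_MT_R hP hA2 htk hkz
  rw [meet_comm] at hmt
  have h1 := my_sub_mul hmt
  have e : k * ((k⁻¹ * E) * z⁻¹) = E * z⁻¹ := by group
  rwa [e] at h1

/-- AT_L: `k ⊥ z`, `k ⊂ E` imply `k ⊂ zE`. -/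
lemma my_AT_L (hP : PerpGroup G) {k z E : G}
    (h : orth k z) (hkE : sub k E) : sub k (z * E) := by
  have hkt : meet k⁻¹ (k⁻¹ * E) = 1 := my_meet_inv_eq_one hkE
  have hkz : orth k⁻¹ z := my_orth_inv_left hP h
  have hmt := my_MT_L hP hkt hkz
  have hcomm : k * z = z * k := my_orth_mul_comm hP h
  have e : z * (k⁻¹ * E) = k⁻¹ * (z * E) := by
    have h2 : z * k⁻¹ = k⁻¹ * z := by
      have h3 : k * (z * k⁻¹) = k * (k⁻¹ * z) := by
        rw [mul_inv_cancel_left, ← mul_assoc, hcomm, mul_inv_cancel_right]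
      exact mul_left_cancel h3
    rw [← mul_assoc, h2, mul_assoc]
  rw [e] at hmt
  have h1 := my_sub_mul hmt
  have e2 : k * (k⁻¹ * (z * E)) = z * E := by group
  rwa [e2] at h1

end Aux

/-- Lemma 4.10: in an A-group, if `x ⊂ w` and `x ⊥ y`, then
`x ⊂ ywy⁻¹`. -/
theorem sub_conj_of_orth {G : Type*} [MedianGroup G] (hG : AGroup G)
    (x y w : G) (hx : sub x w) (hxy : orth x y) :
    sub x (y * w * y⁻¹) := by
  obtain ⟨hP, _, hA2, _⟩ := hG
  have s1 : sub x (w * y⁻¹) := my_AT_R hP hA2 hxy hx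
  have s2 : sub x (y * (w * y⁻¹)) := my_AT_L hP hxy s1
  rwa [← mul_assoc] at s2

end MedianGroup
end ArtinMedian
end
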